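/- arXiv:1805.05160 — 2 statements merged into one kernel-verified Lean document; each statement's English description precedes it below -/
import Mathlib

section
/- Let G be a nilpotent group of class n with upper central series 1 = Z₀ < Z₁ < … < Z_n = G, let φ be an automorphism of G, and for each k let φ_k denote the automorphism of Z_{k+1}/Z_k induced by φ. Then R(φ) ≤ ∏_{k=0}^{n−1} R(φ_k), where the product is taken in ℕ ∪ {∞}. -/
open Matrix

/-- `x` and `y` are twisted conjugate with respect to the automorphism `φ`,
i.e. `x = z * y * (φ z)⁻¹` for some `z`. -/
def TwistedConj {G : Type*} [Group G] (φ : G ≃* G) (x y : G) : Prop :=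
  ∃ z : G, x = z * y * (φ z)⁻¹

/-- The Reidemeister number of an automorphism: the number of twisted conjugacy classes,
as an element of `ℕ∞ = ℕ ∪ {∞}` (`⊤` meaning infinitely many classes). -/
noncomputable def reidemeisterNumber {G : Type*} [Group G] (φ : G ≃* G) : ℕ∞ :=
  Cardinal.toENat (Cardinal.mk (Quot (TwistedConj φ)))

/-!
Filter the twisted classes along the series: the classes of `φ`-conjugacy modulo `Z_k` map
onto those modulo `Z_{k+1}`. If `x = z y φ(z)⁻¹ d` with `d ∈ Z_{k+1}`, then, because
`Z_{k+1}/Z_k` is central in `G/Z_k`, the class of `x` modulo `Z_k` is that of `y d'` for any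
`d'` whose image is `φ_k`-conjugate to that of `d`. So each fibre has at most `R(φ_k)` elements,
and multiplying these bounds from `Z_0 = 1` to `Z_n = G` gives the product.
-/

section

open Subgroup QuotientGroup

variable {G : Type*} [Group G]

theorem twistedConj_equivalence (φ : G ≃* G) : Equivalence (TwistedConj φ) where
  refl _ := ⟨1, by simp⟩
  symm := by
    rintro x y ⟨z, rfl⟩
    exact ⟨z⁻¹, by simp only [map_inv]; group⟩
  trans := by
    rintro x y w ⟨z, rfl⟩ ⟨z', rfl⟩
    exact ⟨z * z', by simp only [map_mul]; group⟩

theorem TwistedConj.of_quot_mk_eq {φ : G ≃* G} {x y : G}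
    (h : Quot.mk (TwistedConj φ) x = Quot.mk _ y) : TwistedConj φ x y :=
  (twistedConj_equivalence φ).eqvGen_iff.mp (Quot.eqvGen_exact h)

/-- Twisted conjugacy of the images in `G ⧸ N`, phrased in `G` so that `φ` need not induce an
automorphism of `G ⧸ N`. -/
def twistedConjModSetoid (φ : G ≃* G) (N : Subgroup G) [N.Normal] : Setoid G where
  r x y := ∃ z : G, (x : G ⧸ N) = ↑(z * y * (φ z)⁻¹)
  iseqv.refl _ := ⟨1, by simp⟩
  iseqv.symm := by
    rintro x y ⟨z, h⟩
    refine ⟨z⁻¹, ?_⟩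
    simp only [mk_mul, mk_inv, map_inv, inv_inv] at h ⊢
    rw [h]
    group
  iseqv.trans := by
    rintro x y w ⟨z, hxy⟩ ⟨z', hyw⟩
    refine ⟨z * z', ?_⟩
    simp only [mk_mul, mk_inv, map_mul, _root_.mul_inv_rev] at hxy hyw ⊢
    rw [hxy, hyw]
    group

noncomputable def reidemeisterNumberMod (φ : G ≃* G) (N : Subgroup G) [N.Normal] : ℕ∞ :=
  Cardinal.toENat (Cardinal.mk (Quotient (twistedConjModSetoid φ N)))

section

variable {φ : G ≃* G} {N : Subgroup G} [N.Normal]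

theorem reidemeisterNumberMod_of_eq_bot (hN : N = ⊥) :
    reidemeisterNumberMod φ N = reidemeisterNumber φ := by
  refine congrArg _ (Cardinal.mk_congr (Quot.congrRight fun x y => exists_congr fun z => ?_))
  rw [QuotientGroup.eq, hN, mem_bot, inv_mul_eq_one, eq_comm]

theorem reidemeisterNumberMod_of_eq_top (hN : N = ⊤) : reidemeisterNumberMod φ N = 1 := by
  have : Subsingleton (Quotient (twistedConjModSetoid φ N)) :=
    ⟨fun a b => Quotient.inductionOn₂ a b fun x y =>
      Quotient.sound ⟨1, QuotientGroup.eq.mpr (hN ▸ mem_top _)⟩⟩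
  have : Unique (Quotient (twistedConjModSetoid φ N)) := uniqueOfSubsingleton ⟦1⟧
  rw [reidemeisterNumberMod, Cardinal.mk_eq_one, map_one]

theorem twistedConjModSetoid_mul_right {x y d : G} (h : twistedConjModSetoid φ N x y)
    (hd : (d : G ⧸ N) ∈ center (G ⧸ N)) : twistedConjModSetoid φ N (x * d) (y * d) := by
  obtain ⟨z, hz⟩ := h
  refine ⟨z, ?_⟩
  simp only [mk_mul, mk_inv] at hz ⊢
  rw [hz, mul_assoc _ _ (d : G ⧸ N), mem_center_iff.mp hd]
  group

theorem twistedConjModSetoid_mul_left {x y e : G} (he : (e : G ⧸ N) ∈ center (G ⧸ N))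
    (h : (x : G ⧸ N) = ↑(e * y * (φ e)⁻¹)) (g : G) :
    twistedConjModSetoid φ N (g * x) (g * y) := by
  refine ⟨e, ?_⟩
  simp only [mk_mul, mk_inv] at h ⊢
  rw [h, ← mul_assoc (e : G ⧸ N), ← mem_center_iff.mp he (g : G ⧸ N)]
  group

end

section

variable {N M : Subgroup G} [N.Normal] {φ : G ≃* G} (hφM : ∀ x ∈ M, φ x ∈ M)
  {ψ : M ⧸ N.subgroupOf M ≃* M ⧸ N.subgroupOf M}
  (hψ : ∀ (x : G) (hx : x ∈ M),
    ψ (QuotientGroup.mk ⟨x, hx⟩) = QuotientGroup.mk ⟨φ x, hφM x hx⟩)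

include hψ in
theorem TwistedConj.exists_mem_mk_eq {d d' : M} (h : TwistedConj ψ (d' : M ⧸ N.subgroupOf M) d) :
    ∃ e ∈ M, ((d' : G) : G ⧸ N) = ↑(e * d * (φ e)⁻¹) := by
  obtain ⟨q, hq⟩ := h
  obtain ⟨⟨e, he⟩, rfl⟩ := QuotientGroup.mk_surjective q
  refine ⟨e, he, ?_⟩
  rw [hψ e he] at hq
  rw [← mk_inv, ← mk_mul, ← mk_mul, QuotientGroup.eq, mem_subgroupOf] at hq
  exact QuotientGroup.eq.mpr (by simpa using hq)

include hψ in
theorem surjective_twistedConjModSetoid_of_central [M.Normal]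
    (hM : M ≤ (center (G ⧸ N)).comap (mk' N)) :
    Function.Surjective fun p : Quotient (twistedConjModSetoid φ M) × Quot (TwistedConj ψ) =>
      (⟦p.1.out * (p.2.out.out : G)⟧ : Quotient (twistedConjModSetoid φ N)) := by
  intro c
  induction c using Quotient.inductionOn with | h x =>
  set y := (⟦x⟧ : Quotient (twistedConjModSetoid φ M)).out
  obtain ⟨z, hz⟩ := (twistedConjModSetoid φ M).iseqv.symm (Quotient.mk_out x)
  let d : M := ⟨(z * y * (φ z)⁻¹)⁻¹ * x, QuotientGroup.eq.mp hz.symm⟩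
  set d' : M := (Quot.mk (TwistedConj ψ) (d : M ⧸ N.subgroupOf M)).out.out
  have hd' : TwistedConj ψ (d' : M ⧸ N.subgroupOf M) d := by
    apply TwistedConj.of_quot_mk_eq
    rw [QuotientGroup.out_eq', Quot.out_eq]
  obtain ⟨e, he, hed'⟩ := TwistedConj.exists_mem_mk_eq hφM hψ hd'
  refine ⟨(⟦x⟧, Quot.mk _ d), Quotient.sound ?_⟩
  have hx : z * y * (φ z)⁻¹ * d = x := mul_inv_cancel_left _ _
  refine (twistedConjModSetoid φ N).iseqv.trans
    (twistedConjModSetoid_mul_left (hM he) hed' y) ?_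
  rw [← hx]
  exact (twistedConjModSetoid φ N).iseqv.symm
    (twistedConjModSetoid_mul_right ⟨z, rfl⟩ (hM d.2))

include hψ in
theorem reidemeisterNumberMod_le_mul [M.Normal] (hM : M ≤ (center (G ⧸ N)).comap (mk' N)) :
    reidemeisterNumberMod φ N ≤ reidemeisterNumberMod φ M * reidemeisterNumber ψ := by
  have := Cardinal.mk_le_of_surjective (surjective_twistedConjModSetoid_of_central hφM hψ hM)
  rw [Cardinal.mk_prod, Cardinal.lift_id, Cardinal.lift_id] at this
  exact (OrderHomClass.mono Cardinal.toENat this).trans_eq (map_mul _ _ _)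

end

theorem reidemeisterNumber_le_prod_of_isAscendingCentralSeries {H : ℕ → Subgroup G}
    [∀ k, (H k).Normal] (hH : Subgroup.IsAscendingCentralSeries H) {n : ℕ} (hn : H n = ⊤)
    (φ : G ≃* G)
    (hφ : ∀ (k : ℕ) (x : G), x ∈ H k → φ x ∈ H k)
    (ψ : ∀ k : ℕ, (H (k + 1) ⧸ (H k).subgroupOf (H (k + 1))) ≃*
      (H (k + 1) ⧸ (H k).subgroupOf (H (k + 1))))
    (hψ : ∀ (k : ℕ) (x : G) (hx : x ∈ H (k + 1)),
      ψ k (QuotientGroup.mk ⟨x, hx⟩) = QuotientGroup.mk ⟨φ x, hφ (k + 1) x hx⟩) :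
    reidemeisterNumber φ ≤ ∏ k ∈ Finset.range n, reidemeisterNumber (ψ k) := by
  have step (k : ℕ) :
      reidemeisterNumberMod φ (H k) ≤
        reidemeisterNumberMod φ (H (k + 1)) * reidemeisterNumber (ψ k) :=
    reidemeisterNumberMod_le_mul (hφ (k + 1)) (hψ k)
      fun x hx => (Subgroup.upperCentralSeriesStep_eq_comap_center (H k)).le (hH.2 x k hx)
  have chain (m : ℕ) : reidemeisterNumber φ ≤
      reidemeisterNumberMod φ (H m) * ∏ k ∈ Finset.range m, reidemeisterNumber (ψ k) := by
    induction m with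
    | zero => simp [reidemeisterNumberMod_of_eq_bot hH.1]
    | succ m ih =>
      calc reidemeisterNumber φ
          ≤ reidemeisterNumberMod φ (H m) * ∏ k ∈ Finset.range m, reidemeisterNumber (ψ k) :=
            ih
        _ ≤ reidemeisterNumberMod φ (H (m + 1)) * reidemeisterNumber (ψ m) *
            ∏ k ∈ Finset.range m, reidemeisterNumber (ψ k) := by gcongr; exact step m
        _ = _ := by rw [Finset.prod_range_succ]; ring
  simpa [reidemeisterNumberMod_of_eq_top hn] using chain n

end

theorem reidemeisterNumber_le_prod_upperCentralSeries_general
    {G : Type*} [Group G] (n : ℕ)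
    (htop : Subgroup.upperCentralSeries G n = ⊤)
    (φ : G ≃* G)
    (hφ : ∀ (k : ℕ) (x : G), x ∈ Subgroup.upperCentralSeries G k → φ x ∈ Subgroup.upperCentralSeries G k)
    (ψ : ∀ k : ℕ,
      (Subgroup.upperCentralSeries G (k + 1) ⧸
          (Subgroup.upperCentralSeries G k).subgroupOf (Subgroup.upperCentralSeries G (k + 1))) ≃*
      (Subgroup.upperCentralSeries G (k + 1) ⧸
          (Subgroup.upperCentralSeries G k).subgroupOf (Subgroup.upperCentralSeries G (k + 1))))
    (hψ : ∀ (k : ℕ) (x : G) (hx : x ∈ Subgroup.upperCentralSeries G (k + 1)),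
      ψ k (QuotientGroup.mk ⟨x, hx⟩) = QuotientGroup.mk ⟨φ x, hφ (k + 1) x hx⟩) :
    reidemeisterNumber φ ≤ ∏ k ∈ Finset.range n, reidemeisterNumber (ψ k) :=
  reidemeisterNumber_le_prod_of_isAscendingCentralSeries
    (Subgroup.upperCentralSeries_isAscendingCentralSeries G) htop φ hφ ψ hψ

/-- If `G` is nilpotent of class `n` with upper central series
`1 = Z₀ < Z₁ < … < Z_n = G` and `φ_k` denotes the automorphism of `Z_{k+1}/Z_k` induced
by an automorphism `φ`, then `R(φ) ≤ ∏_{k=0}^{n-1} R(φ_k)`. -/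
theorem reidemeisterNumber_le_prod_upperCentralSeries
    {G : Type*} [Group G] (n : ℕ)
    (htop : Subgroup.upperCentralSeries G n = ⊤)
    (hstrict : ∀ k < n, Subgroup.upperCentralSeries G k < Subgroup.upperCentralSeries G (k + 1))
    (φ : G ≃* G)
    (hφ : ∀ (k : ℕ) (x : G), x ∈ Subgroup.upperCentralSeries G k → φ x ∈ Subgroup.upperCentralSeries G k)
    (ψ : ∀ k : ℕ,
      (Subgroup.upperCentralSeries G (k + 1) ⧸
          (Subgroup.upperCentralSeries G k).subgroupOf (Subgroup.upperCentralSeries G (k + 1))) ≃*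
      (Subgroup.upperCentralSeries G (k + 1) ⧸
          (Subgroup.upperCentralSeries G k).subgroupOf (Subgroup.upperCentralSeries G (k + 1))))
    (hψ : ∀ (k : ℕ) (x : G) (hx : x ∈ Subgroup.upperCentralSeries G (k + 1)),
      ψ k (QuotientGroup.mk ⟨x, hx⟩) = QuotientGroup.mk ⟨φ x, hφ (k + 1) x hx⟩) :
    reidemeisterNumber φ ≤ ∏ k ∈ Finset.range n, reidemeisterNumber (ψ k) :=
  reidemeisterNumber_le_prod_upperCentralSeries_general n htop φ hφ ψ hψ
end

section
/- Let p be a positive integer which is not a perfect square. Then for every n ≥ 2 the group UT_n(ℤ[√p]) of upper unitriangular n×n matrices over the ring ℤ[√p] does not possess the R_∞-property, i.e. it admits an automorphism with finite Reidemeister number. -/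
open Matrix

/-- A matrix is (upper) unitriangular if it has `1` on the diagonal and `0` below it. -/
def Matrix.IsUnitriangular {n : ℕ} {R : Type*} [CommRing R]
    (M : Matrix (Fin n) (Fin n) R) : Prop :=
  (∀ i, M i i = 1) ∧ ∀ ⦃i j : Fin n⦄, j < i → M i j = 0

namespace Matrix.IsUnitriangular

variable {n : ℕ} {R : Type*} [CommRing R] {M N : Matrix (Fin n) (Fin n) R}

theorem blockTriangular (h : M.IsUnitriangular) : M.BlockTriangular (id : Fin n → Fin n) :=
  fun _ _ hij => h.2 hij

theorem one : (1 : Matrix (Fin n) (Fin n) R).IsUnitriangular :=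
  ⟨fun i => by simp, fun i j hij => by simp [Matrix.one_apply, (ne_of_lt hij).symm]⟩

theorem diag_mul (hM : M.IsUnitriangular) (hN : N.BlockTriangular (id : Fin n → Fin n))
    (i : Fin n) : (M * N) i i = N i i := by
  rw [Matrix.mul_apply, Finset.sum_eq_single i]
  · rw [hM.1 i, one_mul]
  · intro k _ hk
    rcases lt_or_gt_of_ne hk with hlt | hgt
    · rw [hM.2 hlt, zero_mul]
    · rw [hN (show (id i : Fin n) < id k from hgt), mul_zero]
  · intro h; exact absurd (Finset.mem_univ i) h

theorem mul (hM : M.IsUnitriangular) (hN : N.IsUnitriangular) : (M * N).IsUnitriangular := by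
  constructor
  · intro i
    rw [hM.diag_mul hN.blockTriangular i, hN.1 i]
  · intro i j hij
    rw [Matrix.mul_apply]
    refine Finset.sum_eq_zero fun k _ => ?_
    rcases lt_or_ge k i with hk | hk
    · rw [hM.2 hk, zero_mul]
    · rw [hN.2 (lt_of_lt_of_le hij hk), mul_zero]

end Matrix.IsUnitriangular

/-- The group `UT n R` of upper unitriangular `n × n` matrices over `R`, realized as a
subgroup of the group of units of the matrix ring. -/
def UT (n : ℕ) (R : Type*) [CommRing R] : Subgroup (Matrix (Fin n) (Fin n) R)ˣ where
  carrier := {u | Matrix.IsUnitriangular (u : Matrix (Fin n) (Fin n) R)}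
  one_mem' := by simpa using Matrix.IsUnitriangular.one
  mul_mem' := by
    intro a b ha hb
    simpa using ha.mul hb
  inv_mem' := by
    intro u hu
    have hdet : IsUnit ((u : Matrix (Fin n) (Fin n) R)).det :=
      (Matrix.isUnit_iff_isUnit_det _).mp u.isUnit
    haveI : Invertible (u : Matrix (Fin n) (Fin n) R) := u.invertible
    have htri : ((u : Matrix (Fin n) (Fin n) R)⁻¹).BlockTriangular (id : Fin n → Fin n) :=
      Matrix.blockTriangular_inv_of_blockTriangular hu.blockTriangular
    have hval : ((u⁻¹ : (Matrix (Fin n) (Fin n) R)ˣ) : Matrix (Fin n) (Fin n) R)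
        = (u : Matrix (Fin n) (Fin n) R)⁻¹ := by
      simp [Matrix.coe_units_inv]
    constructor
    · intro i
      have h1 : ((u : Matrix (Fin n) (Fin n) R) * (u : Matrix (Fin n) (Fin n) R)⁻¹) i i = 1 := by
        rw [Matrix.mul_nonsing_inv _ hdet]; simp
      rw [hval]
      rw [hu.diag_mul htri i] at h1
      exact h1
    · intro i j hij
      rw [hval]
      exact htri hij

/-- The underlying matrix of an element of `UT n R`. -/
def UTmat {n : ℕ} {R : Type*} [CommRing R] (X : UT n R) : Matrix (Fin n) (Fin n) R :=
  ((X : (Matrix (Fin n) (Fin n) R)ˣ) : Matrix (Fin n) (Fin n) R)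

/-!
Let `ε` be a unit of infinite order of `ℤ[√p]` (a solution of Pell's equation) and let `φ` be
conjugation by `diag(1, ε⁻¹, ε⁻², …)`, which multiplies the entries on the `k`-th superdiagonal
by `ε ^ k`. Twisted conjugation by the elementary matrix `1 + a E_ij` changes the `(i, j)` entry by
`-(1 - ε ^ (j - i)) a` and, apart from it, only entries further from the diagonal. Working outwards
from the diagonal, every element is therefore `φ`-conjugate to one whose `(i, j)` entry lies in a
fixed set of representatives of `ℤ[√p] / (1 - ε ^ (j - i))`. This quotient is finite: the nonzero
element `1 - ε ^ (j - i)` divides its norm `N ≠ 0`, and `ℤ[√p] / (N)` is finite.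
-/
namespace TwistedConj

variable {G : Type*} [Group G] {φ : G ≃* G}

theorem refl (x : G) : TwistedConj φ x x :=
  ⟨1, by simp⟩

theorem trans {x y w : G} (hxy : TwistedConj φ x y) (hyw : TwistedConj φ y w) :
    TwistedConj φ x w := by
  obtain ⟨z, rfl⟩ := hxy
  obtain ⟨z', rfl⟩ := hyw
  exact ⟨z * z', by simp only [map_mul, _root_.mul_inv_rev, mul_assoc]⟩

end TwistedConj

theorem reidemeisterNumber_ne_top_of_finite {G : Type*} [Group G] (φ : G ≃* G) {S : Set G}
    (hS : S.Finite) (hS_meets : ∀ x, ∃ y ∈ S, TwistedConj φ x y) :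
    reidemeisterNumber φ ≠ ⊤ := by
  have : Finite S := hS
  have hsurj : Function.Surjective fun y : S => Quot.mk (TwistedConj φ) (y : G) := by
    rintro ⟨x⟩
    obtain ⟨y, hy, hxy⟩ := hS_meets x
    exact ⟨⟨y, hy⟩, (Quot.sound hxy).symm⟩
  have : Finite (Quot (TwistedConj φ)) := Finite.of_surjective _ hsurj
  rw [reidemeisterNumber, Ne, Cardinal.toENat_eq_top, not_le]
  exact Cardinal.lt_aleph0_of_finite _

namespace Zsqrtd

theorem exists_unit_not_isOfFinOrder {d : ℤ} (h₀ : 0 < d) (hd : ¬IsSquare d) :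
    ∃ ε : (ℤ√d)ˣ, ¬IsOfFinOrder ε := by
  obtain ⟨a, ha⟩ := Pell.IsFundamental.exists_of_not_isSquare h₀ hd
  refine ⟨Unitary.toUnits a, fun hfin => ?_⟩
  obtain ⟨k, hk, hak⟩ := (Unitary.toUnits_injective.isOfFinOrder_iff.mp hfin).exists_pow_eq_one
  exact hk.ne' (by exact_mod_cast (ha.zpow_eq_one_iff k).mp (by exact_mod_cast hak))

theorem finite_quotient_span_singleton {d : ℤ} (hd : ¬IsSquare d) {c : ℤ√d} (hc : c ≠ 0) :
    Finite (ℤ√d ⧸ Ideal.span {c}) := by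
  set N := c.norm
  have hN : N ≠ 0 := fun h => hc ((norm_eq_zero (fun m hm => hd ⟨m, hm⟩) c).mp h)
  have hcN : c ∣ (N : ℤ√d) := ⟨star c, norm_eq_mul_conj c⟩
  let residues : Set (ℤ√d) := {x | x.re ∈ Set.Ico 0 |N| ∧ x.im ∈ Set.Ico 0 |N|}
  have hfin : residues.Finite := by
    refine (((Set.finite_Ico 0 |N|).prod (Set.finite_Ico 0 |N|)).image
      fun q : ℤ × ℤ => (⟨q.1, q.2⟩ : ℤ√d)).subset fun x hx => ⟨(x.re, x.im), hx, rfl⟩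
  refine Set.finite_univ_iff.mp ((hfin.image (Ideal.Quotient.mk _)).subset ?_)
  intro q _
  obtain ⟨x, rfl⟩ := Ideal.Quotient.mk_surjective q
  refine ⟨⟨x.re % N, x.im % N⟩, ⟨⟨Int.emod_nonneg _ hN, Int.emod_lt_abs _ hN⟩,
    ⟨Int.emod_nonneg _ hN, Int.emod_lt_abs _ hN⟩⟩, ?_⟩
  refine (Ideal.Quotient.eq.mpr (Ideal.mem_span_singleton.mpr (hcN.trans ?_))).symm
  rw [intCast_dvd]
  exact ⟨Int.dvd_self_sub_emod, Int.dvd_self_sub_emod⟩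

end Zsqrtd

namespace Matrix

variable {n : ℕ} {R : Type*} [CommRing R]

theorem IsUnitriangular.apply_of_le {M : Matrix (Fin n) (Fin n) R} (hM : M.IsUnitriangular)
    {i j : Fin n} (hji : j ≤ i) : M i j = (1 : Matrix (Fin n) (Fin n) R) i j := by
  rcases hji.lt_or_eq with hlt | rfl
  · rw [hM.2 hlt, one_apply_ne hlt.ne']
  · rw [hM.1, one_apply_eq]

theorem isUnitriangular_transvection {i j : Fin n} (hij : i < j) (c : R) :
    (transvection i j c).IsUnitriangular := by
  refine ⟨fun r => ?_, fun r s hsr => ?_⟩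
  · have : ¬(i = r ∧ j = r) := fun h => hij.ne (h.1.trans h.2.symm)
    simp [transvection, this]
  · have : ¬(i = r ∧ j = s) := by
      rintro ⟨rfl, rfl⟩
      exact absurd (hsr.trans hij) (lt_irrefl _)
    simp [transvection, this, hsr.ne']

section

variable {Y : Matrix (Fin n) (Fin n) R} {i j : Fin n}

theorem IsUnitriangular.transvection_mul_mul_transvection_apply_same (hY : Y.IsUnitriangular)
    (hij : i < j) (a b : R) :
    (transvection i j a * Y * transvection i j b) i j = Y i j + a + b := by
  simp [hY.1, hY.2 hij]

theorem IsUnitriangular.transvection_mul_mul_transvection_apply_of_ne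
    (hY : Y.IsUnitriangular) (hij : i < j) (a b : R) {r s : Fin n} (hrs : (r, s) ≠ (i, j))
    (hlevel : (s : ℕ) - r ≤ (j : ℕ) - i) :
    (transvection i j a * Y * transvection i j b) r s = Y r s := by
  have hij' : (i : ℕ) < j := hij
  by_cases hs : s = j
  · subst hs
    have hir : i < r := lt_of_le_of_ne (by omega) fun h => hrs (by rw [h])
    rw [mul_transvection_apply_same, transvection_mul_apply_of_ne (ha := hir.ne'),
      transvection_mul_apply_of_ne (ha := hir.ne'), hY.2 hir, mul_zero, add_zero]
  · rw [mul_transvection_apply_of_ne (hb := hs)]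
    by_cases hr : r = i
    · subst hr
      have hsj : s < j := lt_of_le_of_ne (by omega) hs
      rw [transvection_mul_apply_same, hY.2 hsj, mul_zero, add_zero]
    · rw [transvection_mul_apply_of_ne (ha := hr)]

end

end Matrix

namespace UT

variable {n : ℕ} {A : Type*} [CommRing A]

theorem isUnitriangular (X : UT n A) : (UTmat X).IsUnitriangular :=
  X.2

theorem UTmat_injective : Function.Injective (UTmat : UT n A → Matrix (Fin n) (Fin n) A) :=
  fun _ _ h => Subtype.ext (Units.ext h)

theorem UTmat_mul (X Y : UT n A) : UTmat (X * Y) = UTmat X * UTmat Y :=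
  rfl

def transvection {i j : Fin n} (hij : i < j) (c : A) : UT n A :=
  ⟨⟨Matrix.transvection i j c, Matrix.transvection i j (-c),
      by rw [transvection_mul_transvection_same _ _ hij.ne, add_neg_cancel, transvection_zero],
      by rw [transvection_mul_transvection_same _ _ hij.ne, neg_add_cancel, transvection_zero]⟩,
    isUnitriangular_transvection hij c⟩

theorem UTmat_transvection {i j : Fin n} (hij : i < j) (c : A) :
    UTmat (transvection hij c) = Matrix.transvection i j c :=
  rfl

theorem UTmat_transvection_inv {i j : Fin n} (hij : i < j) (c : A) :
    UTmat (transvection hij c)⁻¹ = Matrix.transvection i j (-c) :=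
  rfl

def diagonalUnits : (Fin n → Aˣ) →* (Matrix (Fin n) (Fin n) A)ˣ :=
  (Units.map (diagonalRingHom (Fin n) A).toMonoidHom).comp MulEquiv.piUnits.symm.toMonoidHom

theorem val_diagonalUnits (d : Fin n → Aˣ) :
    (diagonalUnits d : Matrix (Fin n) (Fin n) A) = diagonal fun i => (d i : A) :=
  rfl

theorem diagonalUnits_conj_apply (d : Fin n → Aˣ) (X : (Matrix (Fin n) (Fin n) A)ˣ) (r s : Fin n) :
    (↑(diagonalUnits d * X * (diagonalUnits d)⁻¹) : Matrix (Fin n) (Fin n) A) r s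
      = d r * (X : Matrix (Fin n) (Fin n) A) r s * ↑(d s)⁻¹ := by
  rw [← map_inv, Units.val_mul, Units.val_mul, val_diagonalUnits, val_diagonalUnits,
    mul_diagonal, diagonal_mul]
  rfl

theorem diagonalUnits_conj_mem (d : Fin n → Aˣ) {X : (Matrix (Fin n) (Fin n) A)ˣ}
    (hX : X ∈ UT n A) : diagonalUnits d * X * (diagonalUnits d)⁻¹ ∈ UT n A := by
  refine ⟨fun r => ?_, fun r s hsr => ?_⟩
  · rw [diagonalUnits_conj_apply, hX.1, mul_one, Units.mul_inv]
  · rw [diagonalUnits_conj_apply, hX.2 hsr, mul_zero, zero_mul]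

theorem diagonalUnits_mem_normalizer (d : Fin n → Aˣ) :
    diagonalUnits d ∈ Subgroup.normalizer (UT n A : Set (Matrix (Fin n) (Fin n) A)ˣ) := by
  refine Subgroup.mem_normalizer_iff.mpr fun X => ⟨diagonalUnits_conj_mem d, fun hX => ?_⟩
  have := diagonalUnits_conj_mem d⁻¹ hX
  rwa [map_inv, inv_inv, ← mul_assoc, ← mul_assoc, inv_mul_cancel, one_mul, mul_assoc,
    inv_mul_cancel, mul_one] at this

def diagonalConj (d : Fin n → Aˣ) : MulAut (UT n A) :=
  Subgroup.normalizerMonoidHom (H := UT n A) ⟨diagonalUnits d, diagonalUnits_mem_normalizer d⟩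

theorem UTmat_diagonalConj_apply (d : Fin n → Aˣ) (X : UT n A) (r s : Fin n) :
    UTmat (diagonalConj d X) r s = d r * UTmat X r s * ↑(d s)⁻¹ :=
  diagonalUnits_conj_apply d X r s

theorem diagonalConj_transvection (d : Fin n → Aˣ) {i j : Fin n} (hij : i < j) (c : A) :
    diagonalConj d (transvection hij c) = transvection hij (d i * c * ↑(d j)⁻¹) := by
  refine UTmat_injective (Matrix.ext fun r s => ?_)
  rw [UTmat_diagonalConj_apply, UTmat_transvection, UTmat_transvection]
  simp only [Matrix.transvection, Matrix.add_apply, single_apply]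
  by_cases h : i = r ∧ j = s
  · obtain ⟨rfl, rfl⟩ := h
    simp [one_apply_ne hij.ne]
  · by_cases hrs : r = s
    · subst hrs; simp [h]
    · simp [h, one_apply_ne hrs]

theorem exists_twistedConj_sub_mul_entry (d : Fin n → Aˣ) (y : UT n A) {i j : Fin n} (hij : i < j)
    (a : A) :
    ∃ y', TwistedConj (diagonalConj d : UT n A ≃* UT n A) y y' ∧
      UTmat y' i j = UTmat y i j - (1 - ((d i * (d j)⁻¹ : Aˣ) : A)) * a ∧
      ∀ r s, (r, s) ≠ (i, j) → (s : ℕ) - r ≤ (j : ℕ) - i → UTmat y' r s = UTmat y r s := by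
  set z := transvection hij a
  have hmat : UTmat (z⁻¹ * y * diagonalConj d z) = Matrix.transvection i j (-a) * UTmat y *
      Matrix.transvection i j (d i * a * ↑(d j)⁻¹) := by
    rw [UTmat_mul, UTmat_mul, diagonalConj_transvection, UTmat_transvection_inv,
      UTmat_transvection]
  refine ⟨z⁻¹ * y * diagonalConj d z, ⟨z, ?_⟩, ?_, fun r s hrs hlevel => ?_⟩
  · simp [mul_assoc]
  · rw [hmat, (isUnitriangular y).transvection_mul_mul_transvection_apply_same hij, Units.val_mul]
    ring
  · rw [hmat, (isUnitriangular y).transvection_mul_mul_transvection_apply_of_ne hij _ _ hrs hlevel]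

theorem exists_twistedConj_entries_mem (d : Fin n → Aˣ) (T : Fin n → Fin n → Set A)
    (hT : ∀ i j, i < j → ∀ r, ∃ a, r - (1 - ((d i * (d j)⁻¹ : Aˣ) : A)) * a ∈ T i j) (x : UT n A) :
    ∃ y, TwistedConj (diagonalConj d : UT n A ≃* UT n A) x y ∧
      ∀ i j, i < j → UTmat y i j ∈ T i j := by
  classical
  suffices ∀ P : Finset (Fin n × Fin n), (∀ q ∈ P, q.1 < q.2) →
      ∃ y, TwistedConj (diagonalConj d : UT n A ≃* UT n A) x y ∧
        ∀ q ∈ P, UTmat y q.1 q.2 ∈ T q.1 q.2 by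
    obtain ⟨y, hxy, hy⟩ := this {q | q.1 < q.2} (by simp)
    exact ⟨y, hxy, fun i j hij => hy (i, j) (by simpa using hij)⟩
  intro P
  -- Positions are treated by increasing distance from the diagonal, so that fixing one
  -- never disturbs those fixed before.
  induction P using Finset.induction_on_max_value (fun q : Fin n × Fin n => (q.2 : ℕ) - q.1) with
  | empty => exact fun _ => ⟨x, .refl x, by simp⟩
  | insert q P hqP hmax ih =>
    intro hP
    have hq : q.1 < q.2 := hP q (Finset.mem_insert_self q P)
    obtain ⟨y, hxy, hy⟩ := ih (Finset.forall_of_forall_insert hP)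
    obtain ⟨a, ha⟩ := hT q.1 q.2 hq (UTmat y q.1 q.2)
    obtain ⟨y', hyy', hy'q, hy'⟩ := exists_twistedConj_sub_mul_entry d y hq a
    refine ⟨y', hxy.trans hyy', (Finset.forall_mem_insert _ _ _).mpr ⟨hy'q ▸ ha, fun q' hq' => ?_⟩⟩
    rw [hy' q'.1 q'.2 (ne_of_mem_of_not_mem hq' hqP) (hmax q' hq')]
    exact hy q' hq'

theorem finite_setOf_entries_mem (T : Fin n → Fin n → Set A) (hT : ∀ i j, i < j → (T i j).Finite) :
    {y : UT n A | ∀ i j, i < j → UTmat y i j ∈ T i j}.Finite := by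
  let T' i j : Set A := if i < j then T i j else {(1 : Matrix (Fin n) (Fin n) A) i j}
  have hT' : (Set.univ.pi fun i => Set.univ.pi (T' i)).Finite :=
    Set.Finite.pi fun i => Set.Finite.pi fun j => by
      by_cases h : i < j
      · simpa [T', h] using hT i j h
      · simp [T', h]
  refine (hT'.preimage UTmat_injective.injOn).subset fun y hy i _ j _ => ?_
  by_cases h : i < j
  · simpa [T', h] using hy i j h
  · simpa [T', h] using (isUnitriangular y).apply_of_le (not_lt.mp h)

theorem reidemeisterNumber_diagonalConj_ne_top (d : Fin n → Aˣ)
    (hd : ∀ i j, i < j → Finite (A ⧸ Ideal.span {1 - ((d i * (d j)⁻¹ : Aˣ) : A)})) :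
    reidemeisterNumber (diagonalConj d : UT n A ≃* UT n A) ≠ ⊤ := by
  let T i j : Set A :=
    Set.range fun q : A ⧸ Ideal.span {1 - ((d i * (d j)⁻¹ : Aˣ) : A)} => q.out
  have hT : ∀ i j, i < j → ∀ r, ∃ a, r - (1 - ((d i * (d j)⁻¹ : Aˣ) : A)) * a ∈ T i j := by
    intro i j _ r
    obtain ⟨a, ha⟩ := Ideal.mem_span_singleton.mp
      (Ideal.Quotient.eq.mp (Ideal.Quotient.mk_out (Ideal.Quotient.mk _ r)).symm)
    exact ⟨a, ⟨_, by rw [← ha, sub_sub_cancel]⟩⟩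
  refine reidemeisterNumber_ne_top_of_finite _
    (finite_setOf_entries_mem T fun i j hij => ?_) fun x => ?_
  · have := hd i j hij
    exact Set.finite_range _
  · obtain ⟨y, hxy, hy⟩ := exists_twistedConj_entries_mem d T hT x
    exact ⟨y, hy, hxy⟩

end UT

theorem UT_Zsqrtd_not_R_infinity_general
    (p : ℕ) (hp : 0 < p) (hsq : ¬ IsSquare p) (n : ℕ) :
    ∃ φ : MulAut (UT n (Zsqrtd (p : ℤ))),
      reidemeisterNumber (φ : (UT n (Zsqrtd (p : ℤ))) ≃* (UT n (Zsqrtd (p : ℤ)))) ≠ ⊤ := by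
  have hsq' : ¬IsSquare (p : ℤ) := Int.isSquare_natCast_iff.not.mpr hsq
  obtain ⟨ε, hε⟩ := Zsqrtd.exists_unit_not_isOfFinOrder (Int.natCast_pos.mpr hp) hsq'
  refine ⟨UT.diagonalConj fun i => ε⁻¹ ^ (i : ℕ),
    UT.reidemeisterNumber_diagonalConj_ne_top _ fun i j hij => ?_⟩
  have hij : (i : ℕ) < j := hij
  rw [inv_pow, inv_pow, inv_inv, mul_comm, ← pow_sub ε hij.le]
  refine Zsqrtd.finite_quotient_span_singleton hsq' (sub_ne_zero.mpr fun h => hε ?_)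
  exact isOfFinOrder_iff_pow_eq_one.mpr ⟨_, Nat.sub_pos_of_lt hij, Units.val_eq_one.mp h.symm⟩

/-- For a positive non-square integer `p`, the group `UT n (ℤ[√p])` does not possess the
`R∞`-property for any `n ≥ 2`: it admits an automorphism with finite Reidemeister number. -/
theorem UT_Zsqrtd_not_R_infinity
    (p : ℕ) (hp : 0 < p) (hsq : ¬ IsSquare p) (n : ℕ) (hn : 2 ≤ n) :
    ∃ φ : MulAut (UT n (Zsqrtd (p : ℤ))),
      reidemeisterNumber (φ : (UT n (Zsqrtd (p : ℤ))) ≃* (UT n (Zsqrtd (p : ℤ)))) ≠ ⊤ :=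
  UT_Zsqrtd_not_R_infinity_general p hp hsq n
end
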